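/- Gauss–Bonnet spacetime Penrose inequality in spherical symmetry (radial formulation of Theorem 1.2). Let n ≥ 3, λ ≥ 0, α > 0, α̃ = (n−2)(n−3)·α, r₊ > 0, and let V, k_I, k_S be spherically symmetric radial data on [r₊,∞) satisfying the radial Gauss–Bonnet constraints with matter energy density μ̃ and radial momentum density J̃_ν. Assume: (i) the dominant energy condition μ̃(r) ≥ |J̃_ν(r)| for all r > r₊; (ii) the outermost condition H(r) > |k_S(r)| for all r > r₊; (iii) the boundary sphere r = r₊ is a marginally outer trapped surface, i.e. k_S(r₊)² = H(r₊)² = (n−1)²·V(r₊)/r₊²; (iv) m_GB is continuous at r₊ and m_GB(r) → E as r → ∞. Then E ≥ (1/2)·[ r₊^{n−2} + λ·r₊^{n} + α̃·r₊^{n−4} ]. -/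

import Mathlib

/-!
The generalized Hawking mass `m_GB` is nondecreasing outside the MOTS. Subtracting `2 k_S / H`
times the momentum constraint from the Hamiltonian constraint, the terms of Einstein gravity and
the Gauss–Bonnet corrections each collapse to multiples of `m_H'`, and what remains is exactly
`m_GB' = r^{n-1} / (2(n-1)) · (16π μ̃ - 2 (k_S / H) · 8π J̃_ν)`. Since `|k_S| < H`, the dominant
energy condition makes this nonnegative, so `E = lim m_GB ≥ m_GB(r₊)`. At a MOTS the Hawking
mass is `r₊^{n-2} / 2`, and then `m_GB(r₊)` is the right-hand side of the inequality.
-/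

open Real Filter

/-- Mean curvature of the coordinate sphere of radius `r`: `H = (n-1)√(V r)/r`. -/
noncomputable def sphMeanCurv (n : ℕ) (V : ℝ → ℝ) (r : ℝ) : ℝ :=
  ((n : ℝ) - 1) * Real.sqrt (V r) / r

/-- Scalar curvature of `g = V⁻¹dr² + r²·(round metric)`:
`R = (n-1) r^{1-n} (d/dr)[r^{n-2}(1 - V)]`. -/
noncomputable def sphScalCurv (n : ℕ) (V : ℝ → ℝ) (r : ℝ) : ℝ :=
  ((n : ℝ) - 1) / r ^ (n - 1) * deriv (fun ρ => ρ ^ (n - 2) * (1 - V ρ)) r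

/-- The Hawking mass `m_H(r) = (r^{n-2}/2)[1 - V + r² k_S²/(n-1)²]`. -/
noncomputable def hawkingMass (n : ℕ) (V kS : ℝ → ℝ) (r : ℝ) : ℝ :=
  r ^ (n - 2) / 2 * (1 - V r + r ^ 2 * kS r ^ 2 / ((n : ℝ) - 1) ^ 2)

/-- The generalized Gauss–Bonnet Hawking mass
`m_GB(r) = m_H(r) + λ r^n/2 + 2 α̃ m_H(r)²/r^n`. -/
noncomputable def gbHawkingMass (n : ℕ) (lam ta : ℝ) (V kS : ℝ → ℝ) (r : ℝ) : ℝ :=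
  hawkingMass n V kS r + lam * r ^ n / 2 + 2 * ta * (hawkingMass n V kS r) ^ 2 / r ^ n

/-- `N₁ = H·[k_I - k_S/(n-1) - r k_S'/(n-1)]`. -/
noncomputable def gbN1 (n : ℕ) (V kI kS : ℝ → ℝ) (r : ℝ) : ℝ :=
  sphMeanCurv n V r *
    (kI r - kS r / ((n : ℝ) - 1) - r * deriv kS r / ((n : ℝ) - 1))

/-- `𝓜 = R + (k_I + k_S)² - k_I² - k_S²/(n-1)`. -/
noncomputable def gbM (n : ℕ) (V kI kS : ℝ → ℝ) (r : ℝ) : ℝ :=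
  sphScalCurv n V r + (kI r + kS r) ^ 2 - kI r ^ 2 - kS r ^ 2 / ((n : ℝ) - 1)

/-- `μ̃⁽ᵅ⁾ = (n-1)(n-2)(n-3)·(8 m_H/r^n)·[m_H'/r^{n-1} - n m_H/(2 r^n) + (k_S/(n-1)) N₁/H]`. -/
noncomputable def gbMuAlpha (n : ℕ) (V kI kS : ℝ → ℝ) (r : ℝ) : ℝ :=
  ((n : ℝ) - 1) * ((n : ℝ) - 2) * ((n : ℝ) - 3) * (8 * hawkingMass n V kS r / r ^ n) *
    (deriv (hawkingMass n V kS) r / r ^ (n - 1)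
      - (n : ℝ) * hawkingMass n V kS r / (2 * r ^ n)
      + kS r / ((n : ℝ) - 1) * gbN1 n V kI kS r / sphMeanCurv n V r)

/-- `J̃⁽ᵅ⁾_ν = 2 N₁ (n-2)(n-3) m_H/r^n`. -/
noncomputable def gbJAlpha (n : ℕ) (V kI kS : ℝ → ℝ) (r : ℝ) : ℝ :=
  2 * gbN1 n V kI kS r * ((n : ℝ) - 2) * ((n : ℝ) - 3) * hawkingMass n V kS r / r ^ n

section RadialData

variable {n : ℕ} {V kI kS : ℝ → ℝ} {r : ℝ}

lemma cast_sub_one_ne_zero (hn : 2 ≤ n) : (n : ℝ) - 1 ≠ 0 := by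
  have : (2 : ℝ) ≤ n := by exact_mod_cast hn
  linarith

lemma pow_sub_two_mul_one_sub_eq_hawkingMass (hn : 2 ≤ n) (ρ : ℝ) :
    ρ ^ (n - 2) * (1 - V ρ) =
      2 * hawkingMass n V kS ρ - ρ ^ n * kS ρ ^ 2 / ((n : ℝ) - 1) ^ 2 := by
  have hn1 := cast_sub_one_ne_zero hn
  have hpow : ρ ^ n = ρ ^ (n - 2) * ρ ^ 2 := by rw [← pow_add, Nat.sub_add_cancel hn]
  rw [hawkingMass, hpow]
  field_simp
  ring

lemma hasDerivAt_pow_sub_two_mul_one_sub (hn : 2 ≤ n)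
    (hmH : DifferentiableAt ℝ (hawkingMass n V kS) r) (hkS : DifferentiableAt ℝ kS r) :
    HasDerivAt (fun ρ => ρ ^ (n - 2) * (1 - V ρ))
      (2 * deriv (hawkingMass n V kS) r
        - ((n : ℝ) * r ^ (n - 1) * kS r ^ 2 + 2 * r ^ n * kS r * deriv kS r)
          / ((n : ℝ) - 1) ^ 2) r := by
  rw [funext (pow_sub_two_mul_one_sub_eq_hawkingMass (V := V) (kS := kS) hn)]
  refine ((hmH.hasDerivAt.const_mul 2).sub
    (((hasDerivAt_pow n r).mul (hkS.hasDerivAt.pow 2)).div_const _)).congr_deriv ?_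
  simp only [Pi.pow_apply]
  ring

lemma gbM_sub_two_mul_gbN1 (hn : 2 ≤ n) (hr : r ≠ 0) (hH : sphMeanCurv n V r ≠ 0)
    (hmH : DifferentiableAt ℝ (hawkingMass n V kS) r) (hkS : DifferentiableAt ℝ kS r) :
    gbM n V kI kS r - 2 * (kS r / sphMeanCurv n V r) * gbN1 n V kI kS r =
      2 * ((n : ℝ) - 1) * deriv (hawkingMass n V kS) r / r ^ (n - 1) := by
  have hn1 := cast_sub_one_ne_zero hn
  rw [gbM, sphScalCurv, (hasDerivAt_pow_sub_two_mul_one_sub hn hmH hkS).deriv, gbN1,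
    ← pow_sub_one_mul (n := n) (by omega) r]
  field_simp
  ring

lemma gbMuAlpha_sub_four_mul_gbJAlpha (hn : 2 ≤ n) (hH : sphMeanCurv n V r ≠ 0) :
    gbMuAlpha n V kI kS r - 4 * (kS r / sphMeanCurv n V r) * gbJAlpha n V kI kS r =
      ((n : ℝ) - 1) * ((n : ℝ) - 2) * ((n : ℝ) - 3) * (8 * hawkingMass n V kS r / r ^ n) *
        (deriv (hawkingMass n V kS) r / r ^ (n - 1)
          - (n : ℝ) * hawkingMass n V kS r / (2 * r ^ n)) := by
  have hn1 := cast_sub_one_ne_zero hn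
  rw [gbMuAlpha, gbJAlpha]
  field_simp
  ring

lemma hasDerivAt_gbHawkingMass (lam ta : ℝ) (hr : r ≠ 0)
    (hmH : DifferentiableAt ℝ (hawkingMass n V kS) r) :
    HasDerivAt (gbHawkingMass n lam ta V kS)
      (deriv (hawkingMass n V kS) r + lam * (n : ℝ) * r ^ (n - 1) / 2
        + 2 * ta * (2 * hawkingMass n V kS r * deriv (hawkingMass n V kS) r * r ^ n
            - (n : ℝ) * hawkingMass n V kS r ^ 2 * r ^ (n - 1)) / (r ^ n) ^ 2) r := by
  refine ((hmH.hasDerivAt.add (((hasDerivAt_pow n r).const_mul lam).div_const 2)).add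
    (((hmH.hasDerivAt.pow 2).const_mul (2 * ta)).div (hasDerivAt_pow n r)
      (pow_ne_zero n hr))).congr_deriv ?_
  simp only [Pi.pow_apply]
  ring

lemma hasDerivAt_gbHawkingMass_via_constraints (lam : ℝ) {α ta : ℝ} (hn : 2 ≤ n)
    (hta : ta = ((n : ℝ) - 2) * ((n : ℝ) - 3) * α) (hr : r ≠ 0) (hH : sphMeanCurv n V r ≠ 0)
    (hmH : DifferentiableAt ℝ (hawkingMass n V kS) r) (hkS : DifferentiableAt ℝ kS r) :
    HasDerivAt (gbHawkingMass n lam ta V kS)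
      (r ^ (n - 1) / (2 * ((n : ℝ) - 1)) *
        ((gbM n V kI kS r + (n : ℝ) * ((n : ℝ) - 1) * lam + α * gbMuAlpha n V kI kS r)
          - 2 * (kS r / sphMeanCurv n V r)
            * (gbN1 n V kI kS r + 2 * α * gbJAlpha n V kI kS r))) r := by
  have hn1 := cast_sub_one_ne_zero hn
  convert hasDerivAt_gbHawkingMass lam ta hr hmH using 1
  calc _ = r ^ (n - 1) / (2 * ((n : ℝ) - 1)) *
        ((gbM n V kI kS r - 2 * (kS r / sphMeanCurv n V r) * gbN1 n V kI kS r)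
          + (n : ℝ) * ((n : ℝ) - 1) * lam
          + α * (gbMuAlpha n V kI kS r
            - 4 * (kS r / sphMeanCurv n V r) * gbJAlpha n V kI kS r)) := by ring
    _ = _ := by
      rw [gbM_sub_two_mul_gbN1 hn hr hH hmH hkS, gbMuAlpha_sub_four_mul_gbJAlpha hn hH, hta,
        ← pow_sub_one_mul (n := n) (by omega) r]
      field_simp
      ring

lemma hawkingMass_eq_half_pow_of_sq_eq (hn : 2 ≤ n) (hr : r ≠ 0)
    (hk : kS r ^ 2 = ((n : ℝ) - 1) ^ 2 * V r / r ^ 2) :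
    hawkingMass n V kS r = r ^ (n - 2) / 2 := by
  have hn1 := cast_sub_one_ne_zero hn
  rw [hawkingMass, hk]
  field_simp
  ring

lemma gbHawkingMass_eq_of_hawkingMass_eq (lam : ℝ) {α ta : ℝ} (hn : 3 ≤ n)
    (hta : ta = ((n : ℝ) - 2) * ((n : ℝ) - 3) * α) (hr : r ≠ 0)
    (hmH : hawkingMass n V kS r = r ^ (n - 2) / 2) :
    gbHawkingMass n lam ta V kS r = 1 / 2 * (r ^ (n - 2) + lam * r ^ n + ta * r ^ (n - 4)) := by
  rw [gbHawkingMass, hmH]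
  obtain rfl | hn4 : n = 3 ∨ 4 ≤ n := by omega
  · -- `ta = 0` here, which absorbs the truncated exponent `3 - 4 = 0`
    obtain rfl : ta = 0 := by norm_num [hta]
    ring
  · have hpow : (r ^ (n - 2)) ^ 2 = r ^ n * r ^ (n - 4) := by
      rw [← pow_mul, ← pow_add]
      congr 1
      omega
    rw [div_pow, hpow]
    field_simp

end RadialData

lemma div_mul_le_of_abs_le {k H j μ : ℝ} (hk : |k| ≤ H) (hj : |j| ≤ μ) : k / H * j ≤ μ :=
  calc k / H * j ≤ |k| / |H| * |j| := by
        rw [← abs_div, ← abs_mul]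
        exact le_abs_self _
    _ ≤ 1 * |j| := by
        gcongr
        exact div_le_one_of_le₀ (hk.trans (le_abs_self H)) (abs_nonneg H)
    _ ≤ μ := by rwa [one_mul]

lemma le_of_tendsto_of_hasDerivAt_nonneg {f f' : ℝ → ℝ} {a L : ℝ}
    (hcont : ContinuousWithinAt f (Set.Ici a) a) (hf : ∀ x, a < x → HasDerivAt f (f' x) x)
    (hf' : ∀ x, a < x → 0 ≤ f' x) (hlim : Tendsto f atTop (nhds L)) : f a ≤ L := by
  have hmono : MonotoneOn f (Set.Ici a) := by
    refine monotoneOn_of_hasDerivWithinAt_nonneg (f' := f') (convex_Ici a) ?_ ?_ ?_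
    · intro x hx
      rcases (Set.mem_Ici.mp hx).eq_or_lt with rfl | hlt
      · exact hcont
      · exact (hf x hlt).continuousAt.continuousWithinAt
    · rw [interior_Ici]
      exact fun x hx => (hf x hx).hasDerivWithinAt
    · rwa [interior_Ici]
  exact ge_of_tendsto hlim (eventually_ge_atTop a |>.mono fun x hx => hmono Set.self_mem_Ici hx hx)

theorem gb_penrose_inequality_general (n : ℕ) (hn : 3 ≤ n) (lam α ta rp : ℝ)
    (hta : ta = ((n : ℝ) - 2) * ((n : ℝ) - 3) * α) (hrp : 0 < rp)
    (V kI kS μ J : ℝ → ℝ) (E : ℝ)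
    (hkSd : ∀ r, rp < r → DifferentiableAt ℝ kS r)
    (hmHd : ∀ r, rp < r → DifferentiableAt ℝ (hawkingMass n V kS) r)
    -- Gauss–Bonnet Hamiltonian constraint
    (hmu : ∀ r, rp < r → 16 * π * μ r =
      gbM n V kI kS r + (n : ℝ) * ((n : ℝ) - 1) * lam + α * gbMuAlpha n V kI kS r)
    -- Gauss–Bonnet momentum constraint
    (hJ : ∀ r, rp < r → 8 * π * J r = gbN1 n V kI kS r + 2 * α * gbJAlpha n V kI kS r)
    -- (i) dominant energy condition
    (hDEC : ∀ r, rp < r → |J r| ≤ μ r)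
    -- (ii) outermost condition
    (hout : ∀ r, rp < r → |kS r| < sphMeanCurv n V r)
    -- (iii) the boundary sphere `r = rp` is a MOTS: `k_S(r₊)² = H(r₊)² = (n-1)² V(r₊)/r₊²`
    (hMOTS : kS rp ^ 2 = ((n : ℝ) - 1) ^ 2 * V rp / rp ^ 2)
    -- (iv) continuity at `r₊` and convergence to the total energy `E`
    (hcont : ContinuousWithinAt (gbHawkingMass n lam ta V kS) (Set.Ici rp) rp)
    (hlim : Tendsto (gbHawkingMass n lam ta V kS) atTop (nhds E)) :
    1 / 2 * (rp ^ (n - 2) + lam * rp ^ n + ta * rp ^ (n - 4)) ≤ E := by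
  have hderiv : ∀ r, rp < r → HasDerivAt (gbHawkingMass n lam ta V kS)
      (r ^ (n - 1) / (2 * ((n : ℝ) - 1)) *
        (16 * π * μ r - 2 * (kS r / sphMeanCurv n V r) * (8 * π * J r))) r := by
    intro r hr
    rw [hmu r hr, hJ r hr]
    exact hasDerivAt_gbHawkingMass_via_constraints lam (by omega) hta (hrp.trans hr).ne'
      ((abs_nonneg _).trans_lt (hout r hr)).ne' (hmHd r hr) (hkSd r hr)
  have hderiv_nonneg : ∀ r, rp < r → 0 ≤ r ^ (n - 1) / (2 * ((n : ℝ) - 1)) *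
      (16 * π * μ r - 2 * (kS r / sphMeanCurv n V r) * (8 * π * J r)) := by
    intro r hr
    have hn1 : (0 : ℝ) ≤ (n : ℝ) - 1 := sub_nonneg.2 (by exact_mod_cast (by omega : 1 ≤ n))
    have hr0 := (hrp.trans hr).le
    have hdom : 0 ≤ 16 * π * (μ r - kS r / sphMeanCurv n V r * J r) :=
      mul_nonneg (by positivity) (sub_nonneg.2 (div_mul_le_of_abs_le (hout r hr).le (hDEC r hr)))
    exact mul_nonneg (by positivity) (by linarith)
  calc 1 / 2 * (rp ^ (n - 2) + lam * rp ^ n + ta * rp ^ (n - 4))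
      = gbHawkingMass n lam ta V kS rp :=
        (gbHawkingMass_eq_of_hawkingMass_eq lam hn hta hrp.ne'
          (hawkingMass_eq_half_pow_of_sq_eq (by omega) hrp.ne' hMOTS)).symm
    _ ≤ E := le_of_tendsto_of_hasDerivAt_nonneg hcont hderiv hderiv_nonneg hlim

/-- Gauss–Bonnet spacetime Penrose inequality in spherical symmetry (radial formulation of
Theorem 1.2): under the radial Gauss–Bonnet constraints, the dominant energy condition, the
outermost condition, a MOTS boundary at `r = r₊`, continuity of `m_GB` at `r₊` and
`m_GB → E` at infinity, one has `E ≥ (1/2)[ r₊^{n-2} + λ r₊^n + α̃ r₊^{n-4} ]`. -/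
theorem gb_penrose_inequality (n : ℕ) (hn : 3 ≤ n) (lam α ta rp : ℝ) (hlam : 0 ≤ lam)
    (hα : 0 < α) (hta : ta = ((n : ℝ) - 2) * ((n : ℝ) - 3) * α) (hrp : 0 < rp)
    (V kI kS μ J : ℝ → ℝ) (E : ℝ)
    (hV0 : ∀ r, rp ≤ r → 0 ≤ V r) (hVpos : ∀ r, rp < r → 0 < V r)
    (hVd : ∀ r, rp < r → DifferentiableAt ℝ V r)
    (hkSd : ∀ r, rp < r → DifferentiableAt ℝ kS r)
    (hmHd : ∀ r, rp < r → DifferentiableAt ℝ (hawkingMass n V kS) r)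
    -- Gauss–Bonnet Hamiltonian constraint
    (hmu : ∀ r, rp < r → 16 * π * μ r =
      gbM n V kI kS r + (n : ℝ) * ((n : ℝ) - 1) * lam + α * gbMuAlpha n V kI kS r)
    -- Gauss–Bonnet momentum constraint
    (hJ : ∀ r, rp < r → 8 * π * J r = gbN1 n V kI kS r + 2 * α * gbJAlpha n V kI kS r)
    -- (i) dominant energy condition
    (hDEC : ∀ r, rp < r → |J r| ≤ μ r)
    -- (ii) outermost condition
    (hout : ∀ r, rp < r → |kS r| < sphMeanCurv n V r)
    -- (iii) the boundary sphere `r = rp` is a MOTS: `k_S(r₊)² = H(r₊)² = (n-1)² V(r₊)/r₊²`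
    (hMOTS : kS rp ^ 2 = ((n : ℝ) - 1) ^ 2 * V rp / rp ^ 2)
    -- (iv) continuity at `r₊` and convergence to the total energy `E`
    (hcont : ContinuousWithinAt (gbHawkingMass n lam ta V kS) (Set.Ici rp) rp)
    (hlim : Tendsto (gbHawkingMass n lam ta V kS) atTop (nhds E)) :
    1 / 2 * (rp ^ (n - 2) + lam * rp ^ n + ta * rp ^ (n - 4)) ≤ E :=
  gb_penrose_inequality_general n hn lam α ta rp hta hrp V kI kS μ J E hkSd hmHd hmu hJ hDEC hout
    hMOTS hcont hlim
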